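/- Let π, σ, τ be enumerations of a nonempty finite set N. The following are equivalent: (1) τ lies on some geodesic between π and σ in the permutohedral graph, i.e. dist(π,τ) + dist(τ,σ) = dist(π,σ); (2) Inv[π,τ] ∩ Inv[τ,σ] = ∅; (3) for all u, v ∈ N, if u ≺_π v and u ≺_σ v then u ≺_τ v. -/

import Mathlib

/-- An *enumeration* of a finite set `N`: a bijection `π` from `{1,…,n}` (modeled as
`Fin (Fintype.card N)`) onto `N`. -/
abbrev Enum (N : Type*) [Fintype N] := Fin (Fintype.card N) ≃ N

/-- `P ⊆ N × N` is a *poset on `N`*: a reflexive, antisymmetric and transitive relation. -/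
def IsPosetOn {N : Type*} (P : Set (N × N)) : Prop :=
  (∀ u : N, (u, u) ∈ P) ∧
  (∀ u v : N, (u, v) ∈ P → (v, u) ∈ P → u = v) ∧
  (∀ u v w : N, (u, v) ∈ P → (v, w) ∈ P → (u, w) ∈ P)

/-- The diagonal `Δ = {(u,u) : u ∈ N}`. -/
def diag (N : Type*) : Set (N × N) := {p | p.1 = p.2}

/-- The set `L(T)` of *linear extensions* of a relation `T ⊆ N × N`:
enumerations `π` with `π⁻¹(u) ≤ π⁻¹(v)` for all `(u,v) ∈ T`. -/
def LinExt {N : Type*} [Fintype N] (T : Set (N × N)) : Set (Enum N) :=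
  {π | ∀ p ∈ T, π.symm p.1 ≤ π.symm p.2}

/-- `π` and `σ` differ by the adjacent transposition at positions `i, i+1`. -/
def AdjTranspAt {N : Type*} [Fintype N] (π σ : Enum N) (i : Fin (Fintype.card N))
    (h : (i : ℕ) + 1 < Fintype.card N) : Prop :=
  π i = σ ⟨(i : ℕ) + 1, h⟩ ∧ π ⟨(i : ℕ) + 1, h⟩ = σ i ∧
  ∀ k : Fin (Fintype.card N), k ≠ i → k ≠ ⟨(i : ℕ) + 1, h⟩ → π k = σ k

/-- `π` and `σ` differ by an adjacent transposition. -/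
def AdjTransp {N : Type*} [Fintype N] (π σ : Enum N) : Prop :=
  ∃ i h, AdjTranspAt π σ i h

/-- The *permutohedral graph* over `N`: nodes are the enumerations of `N`, and edges join
enumerations differing by an adjacent transposition. -/
def permGraph (N : Type*) [Fintype N] : SimpleGraph (Enum N) where
  Adj π σ := AdjTransp π σ
  symm := by
    constructor
    rintro π σ ⟨i, h, h1, h2, h3⟩
    exact ⟨i, h, h2.symm, h1.symm, fun k hk hk' => (h3 k hk hk').symm⟩
  loopless := by
    constructor
    rintro π ⟨i, h, h1, -, -⟩
    have hi : i = ⟨(i : ℕ) + 1, h⟩ := π.injective h1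
    have : (i : ℕ) = (i : ℕ) + 1 := congrArg Fin.val hi
    omega

/-- `π` and `σ` are joined by an edge of the permutohedral graph labeled by `{u,v}`,
i.e. they differ by the adjacent transposition at some `i` with `{π(i), π(i+1)} = {u,v}`. -/
def AdjLabeled {N : Type*} [Fintype N] (π σ : Enum N) (u v : N) : Prop :=
  ∃ i h, AdjTranspAt π σ i h ∧ ({π i, π ⟨(i : ℕ) + 1, h⟩} : Set N) = {u, v}

/-- `Inv[π,σ]`: the set of *inversions* between enumerations `π` and `σ`, i.e. two-element
sets `{u,v} ⊆ N` whose elements occur in opposite mutual order in `π` and `σ`. -/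
def InvBetween {N : Type*} [Fintype N] (π σ : Enum N) : Set (Set N) :=
  {L | ∃ u v : N, L = {u, v} ∧ π.symm u < π.symm v ∧ σ.symm v < σ.symm u}

/-- `Inv(S)`: the set of *inversions within* a set `S` of enumerations: two-element sets
`{u,v} ⊆ N` labeling some edge of the permutohedral graph with both endpoints in `S`. -/
def InvS {N : Type*} [Fintype N] (S : Set (Enum N)) : Set (Set N) :=
  {L | ∃ u v : N, u ≠ v ∧ L = {u, v} ∧ ∃ π ∈ S, ∃ σ ∈ S, AdjLabeled π σ u v}

/-- `Cov(S)`: the *covering relation* for a set `S` of enumerations: pairs `(u,v)` such that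
some edge labeled `{u,v}` joins `π ∈ S` with `σ ∉ S` and `u` strictly precedes `v` in `π`. -/
def CovS {N : Type*} [Fintype N] (S : Set (Enum N)) : Set (N × N) :=
  {p | ∃ π ∈ S, ∃ σ, σ ∉ S ∧ AdjLabeled π σ p.1 p.2 ∧ π.symm p.1 < π.symm p.2}

/-- The transitive closure `tr(R)` of a relation `R ⊆ N × N`. -/
def trCl {N : Type*} (R : Set (N × N)) : Set (N × N) :=
  {p | Relation.TransGen (fun a b => (a, b) ∈ R) p.1 p.2}

/-- `R` is acyclic: no cycle `u_1, …, u_k = u_1` (`k ≥ 2`) with consecutive pairs in `R`;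
equivalently, no `u` with `(u,u)` in the transitive closure of `R`. -/
def Acyclic {N : Type*} (R : Set (N × N)) : Prop :=
  ∀ u : N, ¬ Relation.TransGen (fun a b => (a, b) ∈ R) u u

/-- A set `S` of nodes of the permutohedral graph is *geodetically convex* if for all
`π, σ ∈ S`, every node `τ` lying on a geodesic between `π` and `σ` belongs to `S`. -/
def GeodConvex {N : Type*} [Fintype N] (S : Set (Enum N)) : Prop :=
  ∀ π ∈ S, ∀ σ ∈ S, ∀ τ : Enum N,
    (permGraph N).dist π τ + (permGraph N).dist τ σ = (permGraph N).dist π σ → τ ∈ S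

/-- The *label* on an edge of the permutohedral graph: the (two-element) set of elements of `N`
whose positions differ in the two endpoint enumerations; for an edge given by the adjacent
transposition at `i` this is exactly `{π(i), π(i+1)}`. -/
def edgeLabel {N : Type*} [Fintype N] : Sym2 (Enum N) → Set N :=
  Sym2.lift ⟨fun π σ => {u | π.symm u ≠ σ.symm u}, fun π σ => by
    ext u; simp [ne_comm]⟩

/-- The total order `T_π` on `N` associated with an enumeration `π`. -/
def Tord {N : Type*} [Fintype N] (π : Enum N) : Set (N × N) :=
  {p | π.symm p.1 ≤ π.symm p.2}

section Stmt7Aux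

set_option maxRecDepth 4000

variable {N : Type*} [Fintype N]

lemma enum_lt_total (e : Enum N) {u v : N} (hne : u ≠ v) (h : ¬ e.symm u < e.symm v) :
    e.symm v < e.symm u :=
  (lt_or_gt_of_ne (fun hh => hne (by simpa using congrArg e hh))).resolve_left h

lemma enum_ne (e : Enum N) {u v : N} (h : e.symm u < e.symm v) : u ≠ v :=
  fun hh => absurd h (by simp [hh])

lemma swap_lt' {n : ℕ} (i j : Fin n) (hj : (j : ℕ) = (i : ℕ) + 1) (x y : Fin n)
    (h1 : ¬(x = i ∧ y = j)) (h2 : ¬(x = j ∧ y = i)) :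
    Equiv.swap i j x < Equiv.swap i j y ↔ x < y := by
  simp only [Equiv.swap_apply_def]
  rw [not_and] at h1 h2
  split_ifs <;> (try rfl) <;> fin_omega

lemma swap_lt {n : ℕ} (i : Fin n) (h : (i : ℕ) + 1 < n) (x y : Fin n)
    (h1 : ¬(x = i ∧ y = ⟨(i : ℕ) + 1, h⟩)) (h2 : ¬(x = ⟨(i : ℕ) + 1, h⟩ ∧ y = i)) :
    Equiv.swap i ⟨(i : ℕ) + 1, h⟩ x < Equiv.swap i ⟨(i : ℕ) + 1, h⟩ y ↔ x < y :=
  swap_lt' i _ rfl x y h1 h2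

/-- From an adjacent transposition, `σ = swap.trans π`. -/
lemma adj_eq_swap_trans {π σ : Enum N} {i} {h} (hA : AdjTranspAt π σ i h) :
    σ = (Equiv.swap i ⟨(i : ℕ) + 1, h⟩).trans π := by
  obtain ⟨h1, h2, h3⟩ := hA
  ext k
  rcases eq_or_ne k i with rfl | hk1
  · simp [Equiv.swap_apply_left, h2]
  rcases eq_or_ne k ⟨(i : ℕ) + 1, h⟩ with rfl | hk2
  · simp [Equiv.swap_apply_right, h1]
  · simp [Equiv.swap_apply_of_ne_of_ne hk1 hk2, h3 k hk1 hk2]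

lemma adj_symm_apply {π σ : Enum N} {i} {h} (hA : AdjTranspAt π σ i h) (u : N) :
    σ.symm u = Equiv.swap i ⟨(i : ℕ) + 1, h⟩ (π.symm u) := by
  rw [adj_eq_swap_trans hA]
  simp [Equiv.symm_swap]

open Finset in
/-- The finset of inversions between `π` and `σ`, oriented by `π`. -/
def invF (π σ : Enum N) : Finset (N × N) :=
  Finset.univ.filter (fun p => π.symm p.1 < π.symm p.2 ∧ σ.symm p.2 < σ.symm p.1)

lemma mem_invF {π σ : Enum N} {p : N × N} :
    p ∈ invF π σ ↔ π.symm p.1 < π.symm p.2 ∧ σ.symm p.2 < σ.symm p.1 := by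
  simp [invF]

def nInv (π σ : Enum N) : ℕ := (invF π σ).card

lemma edge_step {π σ : Enum N} {i} {h} (hA : AdjTranspAt π σ i h) (τ : Enum N) :
    (τ.symm (π ⟨(i : ℕ) + 1, h⟩) < τ.symm (π i) ∧ nInv π τ = nInv σ τ + 1) ∨
    (τ.symm (π i) < τ.symm (π ⟨(i : ℕ) + 1, h⟩) ∧ nInv σ τ = nInv π τ + 1) := by
  classical
  set i₁ : Fin (Fintype.card N) := ⟨(i : ℕ) + 1, h⟩ with hi₁
  set a := π i with ha
  set b := π i₁ with hb
  have hii : i ≠ i₁ := by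
    intro hh; have := congrArg Fin.val hh; simp [hi₁] at this
  have hab : a ≠ b := fun hh => hii (π.injective hh)
  have hpa : π.symm a = i := π.symm_apply_apply i
  have hpb : π.symm b = i₁ := π.symm_apply_apply i₁
  have hs : ∀ u, σ.symm u = Equiv.swap i i₁ (π.symm u) := adj_symm_apply hA
  have hσa : σ.symm a = i₁ := by rw [hs, hpa, Equiv.swap_apply_left]
  have hσb : σ.symm b = i := by rw [hs, hpb, Equiv.swap_apply_right]
  have key : ∀ u v : N, ¬(u = a ∧ v = b) → ¬(u = b ∧ v = a) →
      (σ.symm u < σ.symm v ↔ π.symm u < π.symm v) := by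
    intro u v h1 h2
    rw [hs, hs]
    refine swap_lt' i i₁ rfl _ _ ?_ ?_
    · rintro ⟨e1, e2⟩
      exact h1 ⟨by rw [← hpa] at e1; simpa using congrArg π e1,
        by rw [← hpb] at e2; simpa using congrArg π e2⟩
    · rintro ⟨e1, e2⟩
      exact h2 ⟨by rw [← hpb] at e1; simpa using congrArg π e1,
        by rw [← hpa] at e2; simpa using congrArg π e2⟩
  have hiv : i < i₁ := by rw [Fin.lt_def]; simp [hi₁]
  rcases lt_or_gt_of_ne (fun hh : τ.symm a = τ.symm b => hab (by simpa using congrArg τ hh))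
    with hlt | hgt
  · -- τ.symm a < τ.symm b : insert case
    right
    refine ⟨hlt, ?_⟩
    have hset : invF σ τ = insert (b, a) (invF π τ) := by
      ext p
      obtain ⟨u, v⟩ := p
      rw [mem_invF, Finset.mem_insert, mem_invF]
      dsimp only
      by_cases h1 : u = a ∧ v = b
      · obtain ⟨rfl, rfl⟩ := h1
        refine iff_of_false ?_ ?_
        · rintro ⟨hc, -⟩
          rw [hσa, hσb] at hc
          exact absurd (hiv.trans hc) (lt_irrefl _)
        · rintro (he | ⟨-, hc⟩)
          · exact hab (congrArg Prod.fst he)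
          · exact absurd (hlt.trans hc) (lt_irrefl _)
      by_cases h2 : u = b ∧ v = a
      · obtain ⟨rfl, rfl⟩ := h2
        refine iff_of_true ⟨?_, hlt⟩ (Or.inl rfl)
        rw [hσa, hσb]
        exact hiv
      · rw [key u v h1 h2]
        constructor
        · exact fun hh => Or.inr hh
        · rintro (he | hh)
          · exact absurd ⟨congrArg Prod.fst he, congrArg Prod.snd he⟩ h2
          · exact hh
    have hnm : (b, a) ∉ invF π τ := by
      rw [mem_invF]
      rintro ⟨hc, -⟩
      rw [hpa, hpb] at hc
      exact absurd (hiv.trans hc) (lt_irrefl _)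
    rw [nInv, nInv, hset, Finset.card_insert_of_notMem hnm]
  · -- τ.symm b < τ.symm a : erase case
    left
    refine ⟨hgt, ?_⟩
    have hmem : (a, b) ∈ invF π τ := by
      rw [mem_invF]
      exact ⟨by rw [hpa, hpb]; exact hiv, hgt⟩
    have hset : invF σ τ = (invF π τ).erase (a, b) := by
      ext p
      obtain ⟨u, v⟩ := p
      rw [mem_invF, Finset.mem_erase, mem_invF]
      dsimp only
      by_cases h1 : u = a ∧ v = b
      · obtain ⟨rfl, rfl⟩ := h1
        refine iff_of_false ?_ ?_
        · rintro ⟨hc, -⟩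
          rw [hσa, hσb] at hc
          exact absurd (hiv.trans hc) (lt_irrefl _)
        · rintro ⟨hc, -⟩
          exact hc rfl
      by_cases h2 : u = b ∧ v = a
      · obtain ⟨rfl, rfl⟩ := h2
        refine iff_of_false ?_ ?_
        · rintro ⟨-, hc⟩
          exact absurd (hgt.trans hc) (lt_irrefl _)
        · rintro ⟨-, -, hc⟩
          exact absurd (hgt.trans hc) (lt_irrefl _)
      · rw [key u v h1 h2]
        constructor
        · refine fun hh => ⟨fun he => h1 ⟨congrArg Prod.fst he, congrArg Prod.snd he⟩, hh⟩
        · exact fun hh => hh.2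
    rw [nInv, nInv, hset, Finset.card_erase_of_mem hmem]
    have : 0 < (invF π τ).card := Finset.card_pos.mpr ⟨_, hmem⟩
    omega

lemma eq_of_strictMono {π σ : Enum N} (hm : StrictMono fun j => σ.symm (π j)) : π = σ := by
  have hg : (fun j => σ.symm (π j)) = ⇑(π.trans σ.symm) := rfl
  have hrange : Set.range (fun j => σ.symm (π j)) = Set.range (id : Fin (Fintype.card N) → _) := by
    rw [hg, Set.range_id, Set.range_eq_univ]
    exact (π.trans σ.symm).surjective
  have := (StrictMono.range_inj hm strictMono_id).mp hrange
  ext j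
  have hj : σ.symm (π j) = j := congrFun this j
  have := congrArg σ hj
  simpa using this

lemma nInv_self (π : Enum N) : nInv π π = 0 := by
  rw [nInv, Finset.card_eq_zero, Finset.eq_empty_iff_forall_notMem]
  intro p hp
  rw [mem_invF] at hp
  exact absurd (hp.1.trans hp.2) (lt_irrefl _)

lemma eq_of_nInv_zero {π σ : Enum N} (h0 : nInv π σ = 0) : π = σ := by
  rw [nInv, Finset.card_eq_zero, Finset.eq_empty_iff_forall_notMem] at h0
  refine eq_of_strictMono fun j k hjk => ?_
  have hne : π k ≠ π j := fun hh => absurd (π.injective hh).symm (ne_of_lt hjk)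
  refine enum_lt_total σ hne fun hc => ?_
  refine h0 (π j, π k) ?_
  rw [mem_invF]
  exact ⟨by simpa using hjk, hc⟩

lemma strictMono_of_lt_adj {n : ℕ} {α : Type*} [Preorder α] {f : Fin n → α}
    (hf : ∀ (i : Fin n) (h : (i : ℕ) + 1 < n), f i < f ⟨(i : ℕ) + 1, h⟩) : StrictMono f := by
  have key : ∀ k (hk : k < n) j (hj : j < n), j < k → f ⟨j, hj⟩ < f ⟨k, hk⟩ := by
    intro k
    induction k with
    | zero => intro hk j hj hjk; omega
    | succ k ih =>
      intro hk j hj hjk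
      rcases eq_or_lt_of_le (Nat.lt_succ_iff.mp hjk) with rfl | hlt
      · exact hf ⟨j, hj⟩ hk
      · exact (ih (by omega) j hj hlt).trans (hf ⟨k, by omega⟩ hk)
  intro j k hjk
  exact key k.val k.isLt j.val j.isLt hjk

lemma exists_descent {π σ : Enum N} (hne : π ≠ σ) :
    ∃ (i : Fin (Fintype.card N)) (h : (i : ℕ) + 1 < Fintype.card N),
      σ.symm (π ⟨(i : ℕ) + 1, h⟩) < σ.symm (π i) := by
  by_contra hc
  push_neg at hc
  refine hne (eq_of_strictMono (strictMono_of_lt_adj fun i h => ?_))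
  have hne2 : π i ≠ π ⟨(i : ℕ) + 1, h⟩ := by
    intro hh
    have := congrArg Fin.val (π.injective hh)
    simp at this
  exact (hc i h).lt_of_ne fun hh => hne2 (by simpa using congrArg σ hh)

lemma adjTranspAt_swap (π : Enum N) (i : Fin (Fintype.card N))
    (h : (i : ℕ) + 1 < Fintype.card N) :
    AdjTranspAt π ((Equiv.swap i ⟨(i : ℕ) + 1, h⟩).trans π) i h := by
  refine ⟨?_, ?_, ?_⟩
  · simp [Equiv.swap_apply_right]
  · simp [Equiv.swap_apply_left]
  · intro k hk1 hk2
    simp [Equiv.swap_apply_of_ne_of_ne hk1 hk2]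

lemma nInv_le_walk : ∀ {π σ : Enum N} (w : (permGraph N).Walk π σ),
    nInv π σ ≤ w.length := by
  intro π σ w
  induction w with
  | nil => simp [nInv_self]
  | @cons a b c hadj w ih =>
    obtain ⟨i, hh, hA⟩ := hadj
    rcases edge_step hA c with ⟨-, he⟩ | ⟨-, he⟩ <;>
      · show _ ≤ w.length + 1
        omega

lemma exists_walk : ∀ (m : ℕ) (π σ : Enum N), nInv π σ = m →
    ∃ w : (permGraph N).Walk π σ, w.length = m := by
  intro m
  induction m using Nat.strong_induction_on with
  | _ m ih =>
    intro π σ hm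
    rcases Nat.eq_zero_or_pos m with rfl | hpos
    · obtain rfl := eq_of_nInv_zero hm
      exact ⟨.nil, rfl⟩
    · have hne : π ≠ σ := fun hh => by rw [hh, nInv_self] at hm; omega
      obtain ⟨i, h, hd⟩ := exists_descent hne
      set π' : Enum N := (Equiv.swap i ⟨(i : ℕ) + 1, h⟩).trans π with hπ'
      have hA : AdjTranspAt π π' i h := adjTranspAt_swap π i h
      rcases edge_step hA σ with ⟨-, he⟩ | ⟨hlt, -⟩
      · obtain ⟨w, hw⟩ := ih (m - 1) (by omega) π' σ (by omega)
        refine ⟨.cons ⟨i, h, hA⟩ w, ?_⟩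
        show w.length + 1 = m
        rw [hw]
        omega
      · exact absurd (hd.trans hlt) (lt_irrefl _)

lemma dist_eq_nInv (π σ : Enum N) : (permGraph N).dist π σ = nInv π σ := by
  obtain ⟨w, hw⟩ := exists_walk (nInv π σ) π σ rfl
  refine le_antisymm (le_trans (SimpleGraph.dist_le w) hw.le) ?_
  obtain ⟨w', hw'⟩ := SimpleGraph.Reachable.exists_walk_length_eq_dist (⟨w⟩ :
    (permGraph N).Reachable π σ)
  rw [← hw']
  exact nInv_le_walk w'

lemma enum_not_lt {e : Enum N} {u v : N} (hne : u ≠ v) :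
    ¬ e.symm u < e.symm v ↔ e.symm v < e.symm u :=
  ⟨enum_lt_total e hne, fun h hh => absurd (h.trans hh) (lt_irrefl _)⟩

/-- Pairs inverted between `τ` and `σ`, oriented by `π`. -/
def invD (π τ σ : Enum N) : Finset (N × N) :=
  Finset.univ.filter (fun p => π.symm p.1 < π.symm p.2 ∧
    ¬(τ.symm p.1 < τ.symm p.2 ↔ σ.symm p.1 < σ.symm p.2))

lemma mem_invD {π τ σ : Enum N} {p : N × N} :
    p ∈ invD π τ σ ↔ π.symm p.1 < π.symm p.2 ∧
      ¬(τ.symm p.1 < τ.symm p.2 ↔ σ.symm p.1 < σ.symm p.2) := by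
  simp [invD]

/-- Pairs inverted both between `π,τ` and between `τ,σ`, oriented by `π`. -/
def agreeK (π τ σ : Enum N) : Finset (N × N) :=
  Finset.univ.filter (fun p => π.symm p.1 < π.symm p.2 ∧
    τ.symm p.2 < τ.symm p.1 ∧ σ.symm p.1 < σ.symm p.2)

lemma mem_agreeK {π τ σ : Enum N} {p : N × N} :
    p ∈ agreeK π τ σ ↔ π.symm p.1 < π.symm p.2 ∧
      τ.symm p.2 < τ.symm p.1 ∧ σ.symm p.1 < σ.symm p.2 := by
  simp [agreeK]

lemma card_invD (π τ σ : Enum N) : (invD π τ σ).card = nInv τ σ := by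
  rw [nInv]
  refine (Finset.card_nbij'
    (i := fun p => if π.symm p.1 < π.symm p.2 then p else p.swap)
    (j := fun p => if τ.symm p.1 < τ.symm p.2 then p else p.swap) ?_ ?_ ?_ ?_).symm
  · rintro ⟨u, v⟩ hm
    rw [Finset.mem_coe, mem_invF] at hm
    obtain ⟨ht, hs⟩ := hm
    have hne : u ≠ v := enum_ne τ ht
    dsimp only
    split_ifs with hπ
    · rw [Finset.mem_coe, mem_invD]
      exact ⟨hπ, fun hh => absurd (hs.trans (hh.mp ht)) (lt_irrefl _)⟩
    · rw [Finset.mem_coe, mem_invD]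
      dsimp only [Prod.swap]
      refine ⟨(enum_not_lt hne).mp hπ, fun hh => ?_⟩
      exact absurd (ht.trans (hh.mpr hs)) (lt_irrefl _)
  · rintro ⟨u, v⟩ hm
    rw [Finset.mem_coe, mem_invD] at hm
    obtain ⟨hπ, hd⟩ := hm
    have hne : u ≠ v := enum_ne π hπ
    dsimp only
    split_ifs with ht
    · rw [Finset.mem_coe, mem_invF]
      refine ⟨ht, ?_⟩
      rw [← enum_not_lt hne]
      exact fun hs => hd ⟨fun _ => hs, fun _ => ht⟩
    · rw [Finset.mem_coe, mem_invF]
      dsimp only [Prod.swap]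
      refine ⟨(enum_not_lt hne).mp ht, ?_⟩
      by_contra hs
      exact hd ⟨fun hh => absurd hh ht, fun hh => absurd hh hs⟩
  · rintro ⟨u, v⟩ hm
    rw [Finset.mem_coe, mem_invF] at hm
    obtain ⟨ht, hs⟩ := hm
    dsimp only [Prod.swap]
    split_ifs <;> first | rfl | (exfalso; fin_omega)
  · rintro ⟨u, v⟩ hm
    rw [Finset.mem_coe, mem_invD] at hm
    obtain ⟨hπ, hd⟩ := hm
    clear hd
    dsimp only [Prod.swap]
    split_ifs <;> first | rfl | (exfalso; fin_omega)

lemma triangle_key (π τ σ : Enum N) :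
    nInv π τ + nInv τ σ = nInv π σ + 2 * (agreeK π τ σ).card := by
  classical
  have hinter : invF π τ ∩ invD π τ σ = agreeK π τ σ := by
    ext ⟨u, v⟩
    rw [Finset.mem_inter, mem_invF, mem_invD, mem_agreeK]
    dsimp only
    constructor
    · rintro ⟨⟨hπ, ht⟩, -, hd⟩
      have hne : u ≠ v := enum_ne π hπ
      refine ⟨hπ, ht, ?_⟩
      by_contra hs
      exact hd ⟨fun hh => absurd (ht.trans hh) (lt_irrefl _), fun hh => absurd hh hs⟩
    · rintro ⟨hπ, ht, hs⟩
      exact ⟨⟨hπ, ht⟩, hπ, fun hh => absurd (ht.trans (hh.mpr hs)) (lt_irrefl _)⟩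
  have hunion : invF π σ = (invF π τ \ invD π τ σ) ∪ (invD π τ σ \ invF π τ) := by
    ext ⟨u, v⟩
    rw [Finset.mem_union, Finset.mem_sdiff, Finset.mem_sdiff, mem_invF, mem_invF, mem_invD]
    dsimp only
    by_cases hπ : π.symm u < π.symm v
    · have hne : u ≠ v := enum_ne π hπ
      rw [← enum_not_lt (e := τ) hne, ← enum_not_lt (e := σ) hne]
      by_cases ht : τ.symm u < τ.symm v <;> by_cases hs : σ.symm u < σ.symm v <;>
        simp [hπ, ht, hs]
    · simp [hπ]
  have hd1 : (invF π τ ∩ invD π τ σ).card + (invF π τ \ invD π τ σ).card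
      = (invF π τ).card := Finset.card_inter_add_card_sdiff _ _
  have hd2 : (invD π τ σ ∩ invF π τ).card + (invD π τ σ \ invF π τ).card
      = (invD π τ σ).card := Finset.card_inter_add_card_sdiff _ _
  have hd3 : (invF π σ).card = (invF π τ \ invD π τ σ).card + (invD π τ σ \ invF π τ).card := by
    rw [hunion, Finset.card_union_of_disjoint (disjoint_sdiff_sdiff)]
  have hcomm : invD π τ σ ∩ invF π τ = invF π τ ∩ invD π τ σ := Finset.inter_comm _ _
  have hc : (invF τ σ).card = (invD π τ σ).card := (card_invD π τ σ).symm
  rw [nInv, nInv, nInv, hc, hd3, ← hd1, ← hd2, hcomm, hinter]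
  ring

lemma nInv_triangle_iff (π τ σ : Enum N) :
    nInv π τ + nInv τ σ = nInv π σ ↔
      ∀ u v : N, π.symm u < π.symm v → σ.symm u < σ.symm v → τ.symm u < τ.symm v := by
  rw [triangle_key π τ σ]
  constructor
  · intro heq u v hπ hσ
    have hk : (agreeK π τ σ).card = 0 := by omega
    rw [Finset.card_eq_zero, Finset.eq_empty_iff_forall_notMem] at hk
    by_contra ht
    rw [enum_not_lt (enum_ne π hπ)] at ht
    exact hk (u, v) (mem_agreeK.mpr ⟨hπ, ht, hσ⟩)
  · intro h3
    have hk : agreeK π τ σ = ∅ := by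
      rw [Finset.eq_empty_iff_forall_notMem]
      rintro ⟨u, v⟩ hm
      rw [mem_agreeK] at hm
      obtain ⟨hπ, ht, hs⟩ := hm
      exact absurd ((h3 u v hπ hs).trans ht) (lt_irrefl _)
    rw [hk]
    simp

end Stmt7Aux

/-- For enumerations `π, σ, τ` of `N` the following are equivalent:
(1) `τ` lies on some geodesic between `π` and `σ`, i.e.
`dist(π,τ) + dist(τ,σ) = dist(π,σ)`; (2) `Inv[π,τ] ∩ Inv[τ,σ] = ∅`;
(3) whenever `u ≺_π v` and `u ≺_σ v`, also `u ≺_τ v`. -/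
theorem stmt7 {N : Type*} [Fintype N] [Nonempty N] (π σ τ : Enum N) :
    ((permGraph N).dist π τ + (permGraph N).dist τ σ = (permGraph N).dist π σ ↔
      InvBetween π τ ∩ InvBetween τ σ = ∅) ∧
    ((permGraph N).dist π τ + (permGraph N).dist τ σ = (permGraph N).dist π σ ↔
      ∀ u v : N, π.symm u < π.symm v → σ.symm u < σ.symm v → τ.symm u < τ.symm v) := by
  have hdist : ((permGraph N).dist π τ + (permGraph N).dist τ σ = (permGraph N).dist π σ) ↔
      ∀ u v : N, π.symm u < π.symm v → σ.symm u < σ.symm v → τ.symm u < τ.symm v := by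
    rw [dist_eq_nInv, dist_eq_nInv, dist_eq_nInv]
    exact nInv_triangle_iff π τ σ
  have h23 : (∀ u v : N, π.symm u < π.symm v → σ.symm u < σ.symm v → τ.symm u < τ.symm v) ↔
      InvBetween π τ ∩ InvBetween τ σ = ∅ := by
    constructor
    · intro h3
      rw [Set.eq_empty_iff_forall_notMem]
      rintro L ⟨⟨u, v, hL1, h1, h2⟩, ⟨u', v', hL2, h3', h4⟩⟩
      have huv : u ≠ v := enum_ne π h1
      have hu'v' : u' ≠ v' := enum_ne τ h3'
      have hset : ({u, v} : Set N) = {u', v'} := hL1 ▸ hL2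
      have hu' : u' = u ∨ u' = v := by
        have : u' ∈ ({u, v} : Set N) := hset ▸ (by simp : u' ∈ ({u', v'} : Set N))
        simpa using this
      have hv' : v' = u ∨ v' = v := by
        have : v' ∈ ({u, v} : Set N) := hset ▸ (by simp : v' ∈ ({u', v'} : Set N))
        simpa using this
      rcases hu' with h5 | h5
      · rcases hv' with h6 | h6
        · exact hu'v' (h5.trans h6.symm)
        · rw [h5, h6] at h3'
          exact absurd (h3'.trans h2) (lt_irrefl _)
      · rcases hv' with h6 | h6
        · rw [h5, h6] at h4
          exact absurd ((h3 u v h1 h4).trans h2) (lt_irrefl _)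
        · exact hu'v' (h5.trans h6.symm)
    · intro h2e u v h1 h2
      by_contra ht
      rw [enum_not_lt (enum_ne π h1)] at ht
      have m1 : ({u, v} : Set N) ∈ InvBetween π τ := ⟨u, v, rfl, h1, ht⟩
      have m2 : ({u, v} : Set N) ∈ InvBetween τ σ := ⟨v, u, Set.pair_comm u v, ht, h2⟩
      rw [Set.eq_empty_iff_forall_notMem] at h2e
      exact h2e _ ⟨m1, m2⟩
  exact ⟨hdist.trans h23, hdist⟩
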